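/- Let a(t) ≤ b(t) ≤ c(t) solve a' = a² + bc, b' = b² + ac, c' = c² + ab on [0,T) with S := 2(a+b+c) > 0. For α ∈ [1,3], define h_α = a + (α−1)b if α ∈ [1,2) and h_α = a + b + (α−2)c if α ∈ [2,3]. If h_α ≥ 0 at t = 0, then h_α ≥ 0 for all t ∈ [0,T). -/

import Mathlib

/-!
Write `σ = a + b + c = S / 2`. Along Hamilton's ODE the quotients `a / σ` and `(a + b) / σ` are
nondecreasing as long as `a ≤ b ≤ c` and `σ > 0`: their Wronskians with `σ` are
`b² (c - a) + c² (b - a)` and `a² (c - b) + b² (c - a)`. Since `c / σ = 1 - (a + b) / σ`,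
the quotient `h_α / σ` is, for every `α ∈ [1, 3]`, a constant plus a nonnegative combination of
these two, hence nondecreasing, so `h_α / σ ≥ h_α(0) / σ(0) ≥ 0`.
-/

/-- `h_α`, measuring `α`-nonnegativity of the curvature operator (first kind) in 3D. -/
noncomputable def hAlpha (α a b c : ℝ) : ℝ :=
  if α < 2 then a + (α - 1) * b else a + b + (α - 2) * c

open Set

def HamiltonODE (a b c : ℝ → ℝ) (D : Set ℝ) : Prop :=
  ∀ t ∈ D, HasDerivAt a (a t ^ 2 + b t * c t) t ∧ HasDerivAt b (b t ^ 2 + a t * c t) t ∧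
    HasDerivAt c (c t ^ 2 + a t * b t) t

theorem monotoneOn_div_of_wronskian_nonneg {D : Set ℝ} (hD : Convex ℝ D) {f g f' g' : ℝ → ℝ}
    (hf : ∀ t ∈ D, HasDerivAt f (f' t) t) (hg : ∀ t ∈ D, HasDerivAt g (g' t) t)
    (hg0 : ∀ t ∈ D, g t ≠ 0) (hW : ∀ t ∈ D, 0 ≤ f' t * g t - f t * g' t) :
    MonotoneOn (fun t => f t / g t) D := by
  have hdiv : ∀ t ∈ D, HasDerivAt (fun t => f t / g t) ((f' t * g t - f t * g' t) / g t ^ 2) t :=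
    fun t ht => (hf t ht).div (hg t ht) (hg0 t ht)
  exact monotoneOn_of_hasDerivWithinAt_nonneg hD
    (fun t ht => (hdiv t ht).continuousAt.continuousWithinAt)
    (fun t ht => (hdiv t (interior_subset ht)).hasDerivWithinAt)
    (fun t ht => div_nonneg (hW t (interior_subset ht)) (sq_nonneg _))

theorem nonneg_of_monotoneOn_div {f g : ℝ → ℝ} {T : ℝ}
    (hmono : MonotoneOn (fun t => f t / g t) (Ico 0 T)) (hg : ∀ t ∈ Ico 0 T, 0 < g t)
    (h0 : 0 ≤ f 0) : ∀ t ∈ Ico 0 T, 0 ≤ f t := by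
  intro t ht
  have hzero : (0 : ℝ) ∈ Ico 0 T := ⟨le_rfl, ht.1.trans_lt ht.2⟩
  have hquot : 0 ≤ f t / g t :=
    (div_nonneg h0 (hg 0 hzero).le).trans (hmono hzero ht ht.1)
  simpa using (le_div_iff₀ (hg t ht)).1 hquot

section HamiltonODE

variable {a b c : ℝ → ℝ} {D : Set ℝ}

theorem HamiltonODE.hasDerivAt_sum (hode : HamiltonODE a b c D) {t : ℝ} (ht : t ∈ D) :
    HasDerivAt (fun t => a t + b t + c t)
      ((a t ^ 2 + b t * c t) + (b t ^ 2 + a t * c t) + (c t ^ 2 + a t * b t)) t :=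
  let ⟨ha, hb, hc⟩ := hode t ht
  (ha.add hb).add hc

theorem HamiltonODE.monotoneOn_div_sum (hode : HamiltonODE a b c D) (hD : Convex ℝ D)
    (hord : ∀ t ∈ D, a t ≤ b t ∧ b t ≤ c t) (hσ : ∀ t ∈ D, a t + b t + c t ≠ 0) :
    MonotoneOn (fun t => a t / (a t + b t + c t)) D := by
  refine monotoneOn_div_of_wronskian_nonneg hD (fun t ht => (hode t ht).1)
    (fun t ht => hode.hasDerivAt_sum ht) hσ fun t ht => ?_
  obtain ⟨hab, hbc⟩ := hord t ht
  have hW : 0 ≤ b t ^ 2 * (c t - a t) + c t ^ 2 * (b t - a t) := by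
    have hac := hab.trans hbc
    positivity [sub_nonneg.2 hac, sub_nonneg.2 hab]
  linarith

theorem HamiltonODE.monotoneOn_add_div_sum (hode : HamiltonODE a b c D) (hD : Convex ℝ D)
    (hord : ∀ t ∈ D, a t ≤ b t ∧ b t ≤ c t) (hσ : ∀ t ∈ D, a t + b t + c t ≠ 0) :
    MonotoneOn (fun t => (a t + b t) / (a t + b t + c t)) D := by
  refine monotoneOn_div_of_wronskian_nonneg hD
    (fun t ht => (hode t ht).1.add (hode t ht).2.1)
    (fun t ht => hode.hasDerivAt_sum ht) hσ fun t ht => ?_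
  obtain ⟨hab, hbc⟩ := hord t ht
  have hW : 0 ≤ a t ^ 2 * (c t - b t) + b t ^ 2 * (c t - a t) := by
    have hac := hab.trans hbc
    positivity [sub_nonneg.2 hac, sub_nonneg.2 hbc]
  linarith

end HamiltonODE

theorem monotoneOn_hAlpha_div {α : ℝ} (hα : α ∈ Icc (1 : ℝ) 3) {a b c : ℝ → ℝ} {D : Set ℝ}
    (hA : MonotoneOn (fun t => a t / (a t + b t + c t)) D)
    (hAB : MonotoneOn (fun t => (a t + b t) / (a t + b t + c t)) D)
    (hσ : ∀ t ∈ D, a t + b t + c t ≠ 0) :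
    MonotoneOn (fun t => hAlpha α (a t) (b t) (c t) / (a t + b t + c t)) D := by
  obtain ⟨hα1, hα3⟩ := hα
  by_cases hα2 : α < 2
  · refine ((monotone_mul_left_of_nonneg (sub_nonneg.2 hα2.le)).comp_monotoneOn hA).add
      ((monotone_mul_left_of_nonneg (sub_nonneg.2 hα1)).comp_monotoneOn hAB) |>.congr ?_
    intro t _
    simp only [Function.comp_apply, hAlpha, if_pos hα2]
    ring
  · refine (((monotone_mul_left_of_nonneg (sub_nonneg.2 hα3)).comp_monotoneOn hAB).const_add
      (α - 2)).congr fun t ht => ?_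
    simp only [Function.comp_apply, hAlpha, if_neg hα2]
    field_simp [hσ t ht]
    ring

theorem stmt18_general (α : ℝ) (hα : α ∈ Set.Icc (1:ℝ) 3) (a b c : ℝ → ℝ) (T : ℝ)
    (ha : ∀ t ∈ Set.Ico (0:ℝ) T, HasDerivAt a ((a t)^2 + b t * c t) t)
    (hb : ∀ t ∈ Set.Ico (0:ℝ) T, HasDerivAt b ((b t)^2 + a t * c t) t)
    (hc : ∀ t ∈ Set.Ico (0:ℝ) T, HasDerivAt c ((c t)^2 + a t * b t) t)
    (hord : ∀ t ∈ Set.Ico (0:ℝ) T, a t ≤ b t ∧ b t ≤ c t)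
    (hS : ∀ t ∈ Set.Ico (0:ℝ) T, 0 < 2 * (a t + b t + c t))
    (h0 : 0 ≤ hAlpha α (a 0) (b 0) (c 0)) :
    ∀ t ∈ Set.Ico (0:ℝ) T, 0 ≤ hAlpha α (a t) (b t) (c t) := by
  have hode : HamiltonODE a b c (Ico 0 T) := fun t ht => ⟨ha t ht, hb t ht, hc t ht⟩
  have hσ : ∀ t ∈ Ico 0 T, 0 < a t + b t + c t := fun t ht => by linarith [hS t ht]
  have hσ0 : ∀ t ∈ Ico 0 T, a t + b t + c t ≠ 0 := fun t ht => (hσ t ht).ne'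
  refine nonneg_of_monotoneOn_div (monotoneOn_hAlpha_div hα ?_ ?_ hσ0) hσ h0
  · exact hode.monotoneOn_div_sum (convex_Ico 0 T) hord hσ0
  · exact hode.monotoneOn_add_div_sum (convex_Ico 0 T) hord hσ0

theorem stmt18 (α : ℝ) (hα : α ∈ Set.Icc (1:ℝ) 3) (a b c : ℝ → ℝ) (T : ℝ)
    (hT : 0 < T)
    (ha : ∀ t ∈ Set.Ico (0:ℝ) T, HasDerivAt a ((a t)^2 + b t * c t) t)
    (hb : ∀ t ∈ Set.Ico (0:ℝ) T, HasDerivAt b ((b t)^2 + a t * c t) t)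
    (hc : ∀ t ∈ Set.Ico (0:ℝ) T, HasDerivAt c ((c t)^2 + a t * b t) t)
    (hord : ∀ t ∈ Set.Ico (0:ℝ) T, a t ≤ b t ∧ b t ≤ c t)
    (hS : ∀ t ∈ Set.Ico (0:ℝ) T, 0 < 2 * (a t + b t + c t))
    (h0 : 0 ≤ hAlpha α (a 0) (b 0) (c 0)) :
    ∀ t ∈ Set.Ico (0:ℝ) T, 0 ≤ hAlpha α (a t) (b t) (c t) :=
  stmt18_general α hα a b c T ha hb hc hord hS h0
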